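/- The standard holomorphic filling of the 4-ball: for s² + t² < 1 set θ(s,t) = (t/(2√(1−t²)))·ln((√(1−t²)+s)/(√(1−t²)−s)) and define F_st(z,s,t) = (√(1−s²−t²)·e^{iθ(s,t)}·z , s + it) ∈ ℂ². Then: (i) F_st is a bijection from 𝔻 × {(s,t) ∈ ℝ² : s²+t² < 1} onto D⁴ ∖ K; (ii) F_st maps {z : |z| = 1} × {s²+t² < 1} onto S³ ∖ K; (iii) F_st is C^∞ on the open set {(z,s,t) ∈ ℂ × ℝ² : s²+t² < 1} and its total derivative, as a real-linear map ℝ⁴ → ℝ⁴, is invertible at every point of {(z,s,t) : |z| < 1, s²+t² < 1}; (iv) F_st extends continuously to 𝔻 × {(s,t) : s²+t² ≤ 1} by setting F_st(z,s,t) = (0, s+it) when s²+t² = 1, and this extension maps 𝔻 × {s²+t² = 1} onto K. -/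

import Mathlib

open Metric Complex

/-- The rotation angle `θ(s,t)` of the standard filling. -/
noncomputable def rotAngle (s t : ℝ) : ℝ :=
  (t / (2 * Real.sqrt (1 - t ^ 2))) *
    Real.log ((Real.sqrt (1 - t ^ 2) + s) / (Real.sqrt (1 - t ^ 2) - s))

/-- The standard holomorphic filling
`F_st(z,s,t) = (√(1−s²−t²)·e^{iθ(s,t)}·z , s + it)`. -/
noncomputable def Fst (q : ℂ × ℝ × ℝ) : ℂ × ℂ :=
  ((Real.sqrt (1 - q.2.1 ^ 2 - q.2.2 ^ 2) : ℂ) *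
      Complex.exp (Complex.I * (rotAngle q.2.1 q.2.2 : ℂ)) * q.1,
    (q.2.1 : ℂ) + (q.2.2 : ℂ) * Complex.I)

/-- The closed unit ball `D⁴ ⊆ ℂ²`. -/
def ball4 : Set (ℂ × ℂ) := {p : ℂ × ℂ | ‖p.1‖ ^ 2 + ‖p.2‖ ^ 2 ≤ 1}

/-- The unit sphere `S³ ⊆ ℂ²`. -/
def sphere3 : Set (ℂ × ℂ) := {p : ℂ × ℂ | ‖p.1‖ ^ 2 + ‖p.2‖ ^ 2 = 1}

/-- The unknot `K = {0} × {|w| = 1} ⊆ ℂ²`. -/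
def unknotK : Set (ℂ × ℂ) := {p : ℂ × ℂ | p.1 = 0 ∧ ‖p.2‖ = 1}


noncomputable def Gst (p : ℂ × ℂ) : ℂ × ℝ × ℝ :=
  (p.1 * Complex.exp (-(Complex.I * (rotAngle p.2.re p.2.im : ℂ))) /
      (Real.sqrt (1 - p.2.re ^ 2 - p.2.im ^ 2) : ℂ), p.2.re, p.2.im)

lemma abs_expI (θ : ℝ) : ‖Complex.exp (Complex.I * (θ:ℂ))‖ = 1 := by
  rw [Complex.norm_exp]; simp

lemma abs_expI' (θ : ℝ) : ‖Complex.exp (-(Complex.I * (θ:ℂ)))‖ = 1 := by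
  rw [Complex.norm_exp]; simp

lemma sqrt_pos_c {s t : ℝ} (h : s^2 + t^2 < 1) : 0 < Real.sqrt (1 - s^2 - t^2) :=
  Real.sqrt_pos.2 (by linarith)

lemma GF (q : ℂ × ℝ × ℝ) (h : q.2.1^2 + q.2.2^2 < 1) : Gst (Fst q) = q := by
  obtain ⟨z, s, t⟩ := q
  simp only at h
  have hc : ((Real.sqrt (1 - s^2 - t^2) : ℝ) : ℂ) ≠ 0 := by
    exact_mod_cast (sqrt_pos_c h).ne'
  have hE : Complex.exp (Complex.I * (rotAngle s t : ℂ)) *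
      Complex.exp (-(Complex.I * (rotAngle s t : ℂ))) = 1 := by
    rw [← Complex.exp_add]; simp
  simp only [Gst, Fst, Complex.add_re, Complex.ofReal_re, Complex.mul_re,
    Complex.I_re, Complex.I_im, Complex.ofReal_im, Complex.add_im, Complex.mul_im]
  norm_num
  set E := Complex.exp (Complex.I * (rotAngle s t : ℂ))
  set E' := Complex.exp (-(Complex.I * (rotAngle s t : ℂ)))
  have : ((Real.sqrt (1 - s^2 - t^2) : ℝ) : ℂ) * E * z * E' /
        ((Real.sqrt (1 - s^2 - t^2) : ℝ) : ℂ)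
        = z * (E * E') * (((Real.sqrt (1 - s^2 - t^2) : ℝ) : ℂ) /
          ((Real.sqrt (1 - s^2 - t^2) : ℝ) : ℂ)) := by ring
  rw [this, hE, div_self hc, mul_one, mul_one]

lemma FG (p : ℂ × ℂ) (h : p.2.re^2 + p.2.im^2 < 1) : Fst (Gst p) = p := by
  obtain ⟨u, w⟩ := p
  simp only at h
  have hc : ((Real.sqrt (1 - w.re^2 - w.im^2) : ℝ) : ℂ) ≠ 0 := by
    exact_mod_cast (sqrt_pos_c h).ne'
  have hE : Complex.exp (Complex.I * (rotAngle w.re w.im : ℂ)) *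
      Complex.exp (-(Complex.I * (rotAngle w.re w.im : ℂ))) = 1 := by
    rw [← Complex.exp_add]; simp
  simp only [Fst, Gst, Prod.mk.injEq]
  constructor
  · set E := Complex.exp (Complex.I * (rotAngle w.re w.im : ℂ))
    set E' := Complex.exp (-(Complex.I * (rotAngle w.re w.im : ℂ)))
    field_simp
    calc E * u * E'
        = u * (E * E') := by ring
      _ = u := by rw [hE, mul_one]
  · exact Complex.re_add_im w

lemma abs_lt_sqrt {s t : ℝ} (h : s^2 + t^2 < 1) : |s| < Real.sqrt (1 - t^2) := by
  rw [← Real.sqrt_sq_eq_abs]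
  exact Real.sqrt_lt_sqrt (sq_nonneg s) (by linarith)

lemma contDiff_ofReal : ContDiff ℝ (⊤ : ℕ∞) (fun r : ℝ => (r : ℂ)) := Complex.ofRealCLM.contDiff

lemma contDiffAt_rot {s t : ℝ} (h : s^2 + t^2 < 1) :
    ContDiffAt ℝ (⊤ : ℕ∞) (fun p : ℝ × ℝ => rotAngle p.1 p.2) (s, t) := by
  have h1 : (0:ℝ) < 1 - t^2 := by nlinarith [sq_nonneg s]
  have hs := abs_lt_sqrt h
  have hsub : 0 < Real.sqrt (1 - t^2) - s := by
    have := neg_abs_le s; have := le_abs_self s; linarith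
  have hadd : 0 < Real.sqrt (1 - t^2) + s := by
    have := neg_abs_le s; linarith
  have hin : ContDiffAt ℝ (⊤ : ℕ∞) (fun p : ℝ × ℝ => 1 - p.2^2) (s, t) :=
    (contDiff_const.sub (contDiff_snd.pow 2)).contDiffAt
  have hsq : ContDiffAt ℝ (⊤ : ℕ∞) (fun p : ℝ × ℝ => Real.sqrt (1 - p.2^2)) (s, t) := by
    have := ContDiffAt.comp (g := Real.sqrt) (s, t) (Real.contDiffAt_sqrt h1.ne') hin
    exact this
  have hden : ContDiffAt ℝ (⊤ : ℕ∞) (fun p : ℝ × ℝ => p.2 / (2 * Real.sqrt (1 - p.2^2))) (s, t) :=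
    ContDiffAt.div (by fun_prop) (contDiffAt_const.mul hsq) (by positivity)
  have hquot : ContDiffAt ℝ (⊤ : ℕ∞)
      (fun p : ℝ × ℝ => (Real.sqrt (1 - p.2^2) + p.1) / (Real.sqrt (1 - p.2^2) - p.1)) (s, t) :=
    ContDiffAt.div (hsq.add (by fun_prop)) (hsq.sub (by fun_prop)) hsub.ne'
  have hlog : ContDiffAt ℝ (⊤ : ℕ∞)
      (fun p : ℝ × ℝ => Real.log ((Real.sqrt (1 - p.2^2) + p.1) / (Real.sqrt (1 - p.2^2) - p.1)))
      (s, t) :=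
    (Real.contDiffAt_log.2 (by positivity)).comp _ hquot
  exact (hden.mul hlog : _)

lemma contDiffAt_Fst {q : ℂ × ℝ × ℝ} (h : q.2.1^2 + q.2.2^2 < 1) :
    ContDiffAt ℝ (⊤ : ℕ∞) Fst q := by
  have hc : (0:ℝ) < 1 - q.2.1^2 - q.2.2^2 := by linarith
  have hg : ContDiffAt ℝ (⊤ : ℕ∞) (fun x : ℂ × ℝ × ℝ => (x.2.1, x.2.2)) q := by fun_prop
  have hrot : ContDiffAt ℝ (⊤ : ℕ∞) (fun x : ℂ × ℝ × ℝ => rotAngle x.2.1 x.2.2) q := by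
    have := ContDiffAt.comp (g := fun p : ℝ × ℝ => rotAngle p.1 p.2) q (contDiffAt_rot h) hg
    exact this
  have hsqrt : ContDiffAt ℝ (⊤ : ℕ∞) (fun x : ℂ × ℝ × ℝ => Real.sqrt (1 - x.2.1^2 - x.2.2^2)) q :=
    (Real.contDiffAt_sqrt hc.ne').comp q (by fun_prop)
  have hexp : ContDiffAt ℝ (⊤ : ℕ∞)
      (fun x : ℂ × ℝ × ℝ => Complex.exp (Complex.I * (rotAngle x.2.1 x.2.2 : ℂ))) q := by
    have he : ContDiff ℝ (⊤ : ℕ∞) Complex.exp := (Complex.contDiff_exp (𝕜 := ℂ)).restrict_scalars ℝ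
    exact he.contDiffAt.comp q
      (contDiffAt_const.mul (contDiff_ofReal.contDiffAt.comp q hrot))
  have h1 : ContDiffAt ℝ (⊤ : ℕ∞) (fun x : ℂ × ℝ × ℝ =>
      ((Real.sqrt (1 - x.2.1^2 - x.2.2^2) : ℝ) : ℂ) *
        Complex.exp (Complex.I * (rotAngle x.2.1 x.2.2 : ℂ)) * x.1) q :=
    ((contDiff_ofReal.contDiffAt.comp q hsqrt).mul hexp).mul (by fun_prop)
  have h2 : ContDiffAt ℝ (⊤ : ℕ∞) (fun x : ℂ × ℝ × ℝ => (x.2.1 : ℂ) + (x.2.2 : ℂ) * Complex.I) q := by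
    have := ((contDiff_ofReal.comp (contDiff_fst.comp contDiff_snd)).add
      ((contDiff_ofReal.comp (contDiff_snd.comp contDiff_snd)).mul contDiff_const)
      : ContDiff ℝ (⊤ : ℕ∞) (fun x : ℂ × ℝ × ℝ => (x.2.1 : ℂ) + (x.2.2 : ℂ) * Complex.I))
    exact this.contDiffAt
  exact h1.prodMk h2

lemma contDiffAt_Gst {p : ℂ × ℂ} (h : p.2.re^2 + p.2.im^2 < 1) :
    ContDiffAt ℝ (⊤ : ℕ∞) Gst p := by
  have hc : (0:ℝ) < 1 - p.2.re^2 - p.2.im^2 := by linarith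
  have hg : ContDiffAt ℝ (⊤ : ℕ∞) (fun x : ℂ × ℂ => (x.2.re, x.2.im)) p := by
    exact ((Complex.reCLM.contDiff.comp contDiff_snd).prodMk
      (Complex.imCLM.contDiff.comp contDiff_snd)).contDiffAt
  have hrot : ContDiffAt ℝ (⊤ : ℕ∞) (fun x : ℂ × ℂ => rotAngle x.2.re x.2.im) p := by
    have := ContDiffAt.comp (g := fun q : ℝ × ℝ => rotAngle q.1 q.2) p (contDiffAt_rot h) hg
    exact this
  have hsqrt : ContDiffAt ℝ (⊤ : ℕ∞) (fun x : ℂ × ℂ => Real.sqrt (1 - x.2.re^2 - x.2.im^2)) p := by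
    refine (Real.contDiffAt_sqrt hc.ne').comp p ?_
    exact (contDiff_const.sub ((Complex.reCLM.contDiff.comp contDiff_snd).pow 2)).sub
      ((Complex.imCLM.contDiff.comp contDiff_snd).pow 2) |>.contDiffAt
  have hexp : ContDiffAt ℝ (⊤ : ℕ∞)
      (fun x : ℂ × ℂ => Complex.exp (-(Complex.I * (rotAngle x.2.re x.2.im : ℂ)))) p := by
    have he : ContDiff ℝ (⊤ : ℕ∞) Complex.exp := (Complex.contDiff_exp (𝕜 := ℂ)).restrict_scalars ℝ
    exact he.contDiffAt.comp p
      (contDiffAt_const.mul (contDiff_ofReal.contDiffAt.comp p hrot)).neg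
  have h1 : ContDiffAt ℝ (⊤ : ℕ∞) (fun x : ℂ × ℂ =>
      x.1 * Complex.exp (-(Complex.I * (rotAngle x.2.re x.2.im : ℂ))) /
        ((Real.sqrt (1 - x.2.re^2 - x.2.im^2) : ℝ) : ℂ)) p := by
    have hnum : ContDiffAt ℝ (⊤ : ℕ∞) (fun x : ℂ × ℂ =>
        x.1 * Complex.exp (-(Complex.I * (rotAngle x.2.re x.2.im : ℂ)))) p :=
      ContDiffAt.mul (contDiff_fst.contDiffAt) hexp
    have hden : ContDiffAt ℝ (⊤ : ℕ∞) (fun x : ℂ × ℂ =>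
        ((Real.sqrt (1 - x.2.re^2 - x.2.im^2) : ℝ) : ℂ)) p :=
      contDiff_ofReal.contDiffAt.comp p hsqrt
    have hinv : ContDiffAt ℝ (⊤ : ℕ∞) (fun x : ℂ × ℂ =>
        (((Real.sqrt (1 - x.2.re^2 - x.2.im^2))⁻¹ : ℝ) : ℂ)) p :=
      contDiff_ofReal.contDiffAt.comp p (hsqrt.inv (sqrt_pos_c h).ne')
    have h1' := hnum.mul hinv
    simp only [div_eq_mul_inv, ← Complex.ofReal_inv]
    exact h1'
  exact h1.prodMk hg

lemma isOpen_U : IsOpen {q : ℂ × ℝ × ℝ | q.2.1 ^ 2 + q.2.2 ^ 2 < 1} :=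
  isOpen_lt (by fun_prop) continuous_const

lemma isOpen_V : IsOpen {p : ℂ × ℂ | p.2.re ^ 2 + p.2.im ^ 2 < 1} :=
  isOpen_lt (by fun_prop) continuous_const

lemma Fst_mem_V {q : ℂ × ℝ × ℝ} (h : q.2.1 ^ 2 + q.2.2 ^ 2 < 1) :
    (Fst q).2.re ^ 2 + (Fst q).2.im ^ 2 < 1 := by
  simp only [Fst, Complex.add_re, Complex.ofReal_re, Complex.mul_re, Complex.I_re,
    Complex.ofReal_im, Complex.I_im, Complex.add_im, Complex.mul_im]
  norm_num
  exact h

lemma bij_deriv {q : ℂ × ℝ × ℝ} (hq : q.2.1 ^ 2 + q.2.2 ^ 2 < 1) :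
    Function.Bijective (fderiv ℝ Fst q) := by
  have hv := Fst_mem_V hq
  have hFd : HasFDerivAt Fst (fderiv ℝ Fst q) q :=
    ((contDiffAt_Fst hq).differentiableAt (by simp)).hasFDerivAt
  have hGd : HasFDerivAt Gst (fderiv ℝ Gst (Fst q)) (Fst q) :=
    ((contDiffAt_Gst hv).differentiableAt (by simp)).hasFDerivAt
  set A := fderiv ℝ Fst q
  set B := fderiv ℝ Gst (Fst q)
  -- B ∘ A = id
  have hGF : HasFDerivAt (Gst ∘ Fst) (B.comp A) q := hGd.comp q hFd
  have hGFid : Gst ∘ Fst =ᶠ[nhds q] id := by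
    filter_upwards [isOpen_U.mem_nhds hq] with x hx
    exact GF x hx
  have hBA : B.comp A = ContinuousLinearMap.id ℝ (ℂ × ℝ × ℝ) := by
    have h1 : HasFDerivAt id (B.comp A) q := hGF.congr_of_eventuallyEq hGFid.symm
    exact h1.unique (hasFDerivAt_id q)
  -- A ∘ B = id
  have hFG : HasFDerivAt (Fst ∘ Gst) (A.comp B) (Fst q) := by
    have hqq : Gst (Fst q) = q := GF q hq
    have : HasFDerivAt Fst A (Gst (Fst q)) := by rw [hqq]; exact hFd
    exact this.comp (Fst q) hGd
  have hFGid : Fst ∘ Gst =ᶠ[nhds (Fst q)] id := by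
    filter_upwards [isOpen_V.mem_nhds hv] with x hx
    exact FG x hx
  have hAB : A.comp B = ContinuousLinearMap.id ℝ (ℂ × ℂ) := by
    have h1 : HasFDerivAt id (A.comp B) (Fst q) := hFG.congr_of_eventuallyEq hFGid.symm
    exact h1.unique (hasFDerivAt_id (Fst q))
  constructor
  · intro x y hxy
    have h1 : B (A x) = x := by
      have := ContinuousLinearMap.ext_iff.1 hBA x; simpa using this
    have h2 : B (A y) = y := by
      have := ContinuousLinearMap.ext_iff.1 hBA y; simpa using this
    rw [← h1, ← h2, hxy]
  · intro y
    refine ⟨B y, ?_⟩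
    have := ContinuousLinearMap.ext_iff.1 hAB y; simpa using this

lemma abs_Fst_fst (q : ℂ × ℝ × ℝ) :
    ‖(Fst q).1‖ = Real.sqrt (1 - q.2.1 ^ 2 - q.2.2 ^ 2) * ‖q.1‖ := by
  simp only [Fst, norm_mul, abs_expI, Complex.norm_real, Real.norm_eq_abs,
    _root_.abs_of_nonneg (Real.sqrt_nonneg _), mul_one]

lemma sq_abs_Fst_snd (q : ℂ × ℝ × ℝ) :
    ‖(Fst q).2‖ ^ 2 = q.2.1 ^ 2 + q.2.2 ^ 2 := by
  rw [Complex.sq_norm]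
  simp [Fst, Complex.normSq_apply]
  ring

lemma abs_Gst_fst (p : ℂ × ℂ) :
    ‖(Gst p).1‖ = ‖p.1‖ / Real.sqrt (1 - p.2.re ^ 2 - p.2.im ^ 2) := by
  simp only [Gst, norm_div, norm_mul, abs_expI', Complex.norm_real, Real.norm_eq_abs,
    _root_.abs_of_nonneg (Real.sqrt_nonneg _), mul_one]

lemma sq_abs_eq (w : ℂ) : ‖w‖ ^ 2 = w.re ^ 2 + w.im ^ 2 := by
  rw [Complex.sq_norm, Complex.normSq_apply]; ring


lemma Fst_boundary (z : ℂ) (s t : ℝ) (h : s ^ 2 + t ^ 2 = 1) :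
    Fst (z, s, t) = (0, (s : ℂ) + (t : ℂ) * Complex.I) := by
  have : 1 - s ^ 2 - t ^ 2 = 0 := by linarith
  simp [Fst, this]

/-- The standard holomorphic filling of the 4-ball: `F_st` is (i) a bijection from
`𝔻 × {s²+t² < 1}` onto `D⁴ ∖ K`; (ii) maps `∂𝔻 × {s²+t² < 1}` onto `S³ ∖ K`;
(iii) is `C^∞` on `{s²+t² < 1}` with invertible real total derivative at every point of
`{|z| < 1, s²+t² < 1}`; and (iv) extends continuously to `𝔻 × {s²+t² ≤ 1}` with
`F_st(z,s,t) = (0, s+it)` for `s²+t² = 1`, mapping `𝔻 × {s²+t² = 1}` onto `K`. -/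
theorem standard_holomorphic_filling :
    (Set.BijOn Fst
      (closedBall (0 : ℂ) 1 ×ˢ {p : ℝ × ℝ | p.1 ^ 2 + p.2 ^ 2 < 1})
      (ball4 \ unknotK)) ∧
    (Fst '' (sphere (0 : ℂ) 1 ×ˢ {p : ℝ × ℝ | p.1 ^ 2 + p.2 ^ 2 < 1}) =
      sphere3 \ unknotK) ∧
    (ContDiffOn ℝ (⊤ : ℕ∞) Fst {q : ℂ × ℝ × ℝ | q.2.1 ^ 2 + q.2.2 ^ 2 < 1} ∧
      ∀ q : ℂ × ℝ × ℝ, ‖q.1‖ < 1 → q.2.1 ^ 2 + q.2.2 ^ 2 < 1 →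
        Function.Bijective (fderiv ℝ Fst q)) ∧
    (ContinuousOn Fst
        (closedBall (0 : ℂ) 1 ×ˢ {p : ℝ × ℝ | p.1 ^ 2 + p.2 ^ 2 ≤ 1}) ∧
      (∀ (z : ℂ) (s t : ℝ), s ^ 2 + t ^ 2 = 1 →
        Fst (z, s, t) = (0, (s : ℂ) + (t : ℂ) * Complex.I)) ∧
      Fst '' (closedBall (0 : ℂ) 1 ×ˢ {p : ℝ × ℝ | p.1 ^ 2 + p.2 ^ 2 = 1}) =
        unknotK) := by
  have habs_mem : ∀ z : ℂ, z ∈ closedBall (0 : ℂ) 1 ↔ ‖z‖ ≤ 1 := by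
    intro z; rw [mem_closedBall_zero_iff]
  -- membership of Gst p in the source set, and surjectivity helper
  have hsurj : ∀ p : ℂ × ℂ, ‖p.1‖ ^ 2 + ‖p.2‖ ^ 2 ≤ 1 → p ∉ unknotK →
      (Gst p ∈ closedBall (0 : ℂ) 1 ×ˢ {x : ℝ × ℝ | x.1 ^ 2 + x.2 ^ 2 < 1} ∧ Fst (Gst p) = p ∧
        p.2.re ^ 2 + p.2.im ^ 2 < 1 ∧
        ‖(Gst p).1‖ ^ 2 = (‖p.1‖ ^ 2) / (1 - p.2.re ^ 2 - p.2.im ^ 2)) := by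
    intro p hball hK
    have h2 : ‖p.2‖ ^ 2 ≤ 1 := by nlinarith [sq_nonneg (‖p.1‖)]
    have hlt : ‖p.2‖ ^ 2 < 1 := by
      rcases lt_or_eq_of_le h2 with h | h
      · exact h
      · exfalso
        have h1 : ‖p.1‖ ^ 2 ≤ 0 := by linarith
        have h1' : ‖p.1‖ = 0 := by nlinarith [norm_nonneg p.1]
        exact hK ⟨norm_eq_zero.1 h1', by nlinarith [norm_nonneg p.2]⟩
    have hw : p.2.re ^ 2 + p.2.im ^ 2 < 1 := by rw [← sq_abs_eq]; exact hlt
    have hc : (0:ℝ) < 1 - p.2.re ^ 2 - p.2.im ^ 2 := by linarith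
    have hsq : Real.sqrt (1 - p.2.re ^ 2 - p.2.im ^ 2) ^ 2 = 1 - p.2.re ^ 2 - p.2.im ^ 2 :=
      Real.sq_sqrt hc.le
    have habs2 : ‖(Gst p).1‖ ^ 2
        = ‖p.1‖ ^ 2 / (1 - p.2.re ^ 2 - p.2.im ^ 2) := by
      rw [abs_Gst_fst, div_pow, hsq]
    refine ⟨?_, FG p hw, hw, habs2⟩
    refine Set.mem_prod.2 ⟨?_, hw⟩
    rw [habs_mem]
    have hle : ‖(Gst p).1‖ ^ 2 ≤ 1 := by
      rw [habs2, div_le_one hc]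
      have := sq_abs_eq p.2
      nlinarith
    nlinarith [norm_nonneg (Gst p).1]
  refine ⟨⟨?_, ?_, ?_⟩, ?_, ⟨?_, ?_⟩, ?_, Fst_boundary, ?_⟩
  · -- MapsTo
    rintro ⟨z, s, t⟩ ⟨hz, hst⟩
    simp only [Set.mem_setOf_eq] at hst
    have hz1 : ‖z‖ ≤ 1 := (habs_mem z).1 hz
    have h1 := abs_Fst_fst (z, s, t)
    have h2 := sq_abs_Fst_snd (z, s, t)
    simp only at h1 h2
    have hsq : Real.sqrt (1 - s ^ 2 - t ^ 2) ^ 2 = 1 - s ^ 2 - t ^ 2 :=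
      Real.sq_sqrt (by linarith)
    constructor
    · show ‖_‖ ^ 2 + ‖_‖ ^ 2 ≤ 1
      rw [h1, h2, mul_pow, hsq]
      nlinarith [norm_nonneg z,
        mul_nonneg (by linarith : (0:ℝ) ≤ 1 - s^2 - t^2)
          (by nlinarith [norm_nonneg z] : (0:ℝ) ≤ 1 - ‖z‖ ^ 2)]
    · intro ⟨_, hK2⟩
      rw [hK2] at h2
      norm_num at h2
      linarith
  · -- InjOn
    rintro a ⟨_, ha⟩ b ⟨_, hb⟩ hab
    simp only [Set.mem_setOf_eq] at ha hb
    rw [← GF a ha, ← GF b hb, hab]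
  · -- SurjOn
    rintro p ⟨hp, hK⟩
    obtain ⟨hmem, hFG, _, _⟩ := hsurj p hp hK
    exact ⟨Gst p, hmem, hFG⟩
  · -- image of sphere part
    ext p
    constructor
    · rintro ⟨⟨z, s, t⟩, ⟨hz, hst⟩, rfl⟩
      simp only [Set.mem_setOf_eq] at hst
      have hz1 : ‖z‖ = 1 := by
        have := mem_sphere_zero_iff_norm.1 hz; exact this
      have h1 := abs_Fst_fst (z, s, t)
      have h2 := sq_abs_Fst_snd (z, s, t)
      simp only at h1 h2
      have hsq : Real.sqrt (1 - s ^ 2 - t ^ 2) ^ 2 = 1 - s ^ 2 - t ^ 2 :=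
        Real.sq_sqrt (by linarith)
      constructor
      · show ‖_‖ ^ 2 + ‖_‖ ^ 2 = 1
        rw [h1, h2, hz1, mul_one, hsq]; ring
      · intro ⟨_, hK2⟩
        rw [hK2] at h2
        norm_num at h2
        linarith
    · rintro ⟨hp, hK⟩
      obtain ⟨hmem, hFG, hw, habs2⟩ := hsurj p hp.le hK
      refine ⟨Gst p, ⟨?_, (Set.mem_prod.1 hmem).2⟩, hFG⟩
      rw [mem_sphere_zero_iff_norm]
      show ‖(Gst p).1‖ = 1
      have hc : (0:ℝ) < 1 - p.2.re ^ 2 - p.2.im ^ 2 := by linarith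
      have h1 : ‖(Gst p).1‖ ^ 2 = 1 := by
        rw [habs2]
        have := sq_abs_eq p.2
        have hnum : ‖p.1‖ ^ 2 = 1 - p.2.re ^ 2 - p.2.im ^ 2 := by
          have := hp; simp only [sphere3, Set.mem_setOf_eq] at this; nlinarith
        rw [hnum, div_self hc.ne']
      nlinarith [norm_nonneg (Gst p).1]
  · -- ContDiffOn
    intro q hq
    exact (contDiffAt_Fst hq).contDiffWithinAt
  · -- derivative bijective
    intro q _ hq
    exact bij_deriv hq
  · -- ContinuousOn up to boundary
    rintro ⟨z, s, t⟩ ⟨hz, hst⟩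
    simp only [Set.mem_setOf_eq] at hst
    rcases lt_or_eq_of_le hst with h | h
    · exact (contDiffAt_Fst h).continuousAt.continuousWithinAt
    · have hb : Fst (z, s, t) = (0, (s : ℂ) + (t : ℂ) * Complex.I) := Fst_boundary z s t h
      have hcont2 : Continuous (fun q : ℂ × ℝ × ℝ => ((q.2.1 : ℂ) + (q.2.2 : ℂ) * Complex.I)) := by
        fun_prop
      have hzero : ((Real.sqrt (1 - s ^ 2 - t ^ 2) : ℝ) : ℂ) *
          Complex.exp (Complex.I * (rotAngle s t : ℂ)) * z = 0 := by
        rw [show 1 - s ^ 2 - t ^ 2 = 0 by linarith]; simp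
      have key : Filter.Tendsto (fun x : ℂ × ℝ × ℝ =>
          ((Real.sqrt (1 - x.2.1 ^ 2 - x.2.2 ^ 2) : ℝ) : ℂ) *
            Complex.exp (Complex.I * (rotAngle x.2.1 x.2.2 : ℂ)) * x.1)
          (nhdsWithin (z, s, t)
            (closedBall (0 : ℂ) 1 ×ˢ {p : ℝ × ℝ | p.1 ^ 2 + p.2 ^ 2 ≤ 1}))
          (nhds 0) := by
        apply squeeze_zero_norm'
          (a := fun q : ℂ × ℝ × ℝ => Real.sqrt (1 - q.2.1 ^ 2 - q.2.2 ^ 2))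
        · filter_upwards [self_mem_nhdsWithin] with x hx
          obtain ⟨hx1, hx2⟩ := hx
          simp only [Set.mem_setOf_eq] at hx2
          have := abs_Fst_fst x
          have hx1' : ‖x.1‖ ≤ 1 := (habs_mem x.1).1 hx1
          calc ‖(Fst x).1‖ = Real.sqrt (1 - x.2.1 ^ 2 - x.2.2 ^ 2) * ‖x.1‖ := this
            _ ≤ Real.sqrt (1 - x.2.1 ^ 2 - x.2.2 ^ 2) * 1 :=
                mul_le_mul_of_nonneg_left hx1' (Real.sqrt_nonneg _)
            _ = Real.sqrt (1 - x.2.1 ^ 2 - x.2.2 ^ 2) := mul_one _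
        · have hg : Continuous (fun q : ℂ × ℝ × ℝ => Real.sqrt (1 - q.2.1 ^ 2 - q.2.2 ^ 2)) := by
            fun_prop
          have h0 : Real.sqrt (1 - s ^ 2 - t ^ 2) = 0 := by
            rw [show 1 - s ^ 2 - t ^ 2 = 0 by linarith, Real.sqrt_zero]
          have := hg.continuousWithinAt
            (s := closedBall (0 : ℂ) 1 ×ˢ {p : ℝ × ℝ | p.1 ^ 2 + p.2 ^ 2 ≤ 1}) (x := (z, s, t))
          rwa [ContinuousWithinAt, h0] at this
      apply ContinuousWithinAt.prodMk
      · unfold ContinuousWithinAt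
        convert key using 2
      · exact hcont2.continuousWithinAt
  · -- image of boundary = unknot
    ext p
    constructor
    · rintro ⟨⟨z, s, t⟩, ⟨hz, hst⟩, rfl⟩
      simp only [Set.mem_setOf_eq] at hst
      rw [Fst_boundary z s t hst]
      refine ⟨rfl, ?_⟩
      have : ‖(s : ℂ) + (t : ℂ) * Complex.I‖ ^ 2 = 1 := by
        rw [sq_abs_eq]
        simp only [Complex.add_re, Complex.ofReal_re, Complex.mul_re, Complex.I_re,
          Complex.ofReal_im, Complex.I_im, Complex.add_im, Complex.mul_im]
        norm_num
        exact hst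
      nlinarith [norm_nonneg ((s : ℂ) + (t : ℂ) * Complex.I)]
    · rintro ⟨h1, h2⟩
      refine ⟨(0, p.2.re, p.2.im), ⟨?_, ?_⟩, ?_⟩
      · simp [habs_mem]
      · show p.2.re ^ 2 + p.2.im ^ 2 = 1
        rw [← sq_abs_eq, h2]; norm_num
      · have hst : p.2.re ^ 2 + p.2.im ^ 2 = 1 := by rw [← sq_abs_eq, h2]; norm_num
        rw [Fst_boundary 0 p.2.re p.2.im hst, ← h1, Complex.re_add_im]
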